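/- Let H be a real Hilbert space, u ∈ H a snapshot vector, φ_1,…,φ_d an orthonormal family, and suppose u is in the span of φ_1,…,φ_d. If u^n is one of M snapshots u^1,…,u^M with φ_k = (1/√(Mλ_k))·∑_{j=1}^M x_k^j u^j where (λ_k, x_k) are eigenpairs of the correlation matrix K_{ij} = (1/M)⟨u^i, u^j⟩ with orthonormal eigenvectors, then ⟨u^n, φ_i⟩ = √M·√λ_i·x_i^n, and consequently ‖u^n - Π_r u^n‖ = √M·(∑_{i=r+1}^d λ_i (x_i^n)^2)^{1/2} ≤ √M·√λ_{r+1}. -/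

import Mathlib

/-!
Since `K` is the Gram matrix of the snapshots scaled by `1/M`, pairing `uⁿ` with `∑ⱼ xᵢʲ uʲ`
gives `M (K xᵢ)ⁿ = M λᵢ xᵢⁿ`, so `⟨uⁿ, φᵢ⟩ = √(M λᵢ) xᵢⁿ`. The residual `uⁿ - Π_r uⁿ` is the tail
of the orthonormal expansion of `uⁿ`, whose norm is computed by Pythagoras. Finally
`λᵢ ≤ λ_{r+1}` on the tail, and `∑ᵢ (xᵢⁿ)² ≤ 1` is Bessel's inequality for the orthonormal
eigenvectors tested against the `n`-th coordinate vector.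
-/

open Finset

theorem Orthonormal.norm_sum_smul_eq_sqrt {ι E : Type*} [NormedAddCommGroup E]
    [InnerProductSpace ℝ E] {v : ι → E} (hv : Orthonormal ℝ v) (c : ι → ℝ) (s : Finset ι) :
    ‖∑ i ∈ s, c i • v i‖ = √(∑ i ∈ s, c i ^ 2) := by
  rw [← Real.sqrt_sq (norm_nonneg _), ← real_inner_self_eq_norm_sq, hv.inner_sum]
  simp only [conj_trivial, sq]

theorem Orthonormal.sum_sq_apply_le_one {ι κ : Type*} [Fintype κ] [DecidableEq κ]
    {x : ι → EuclideanSpace ℝ κ} (hx : Orthonormal ℝ x) (s : Finset ι) (n : κ) :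
    ∑ i ∈ s, x i n ^ 2 ≤ 1 := by
  simpa [EuclideanSpace.inner_single_right] using
    hx.sum_inner_products_le (x := EuclideanSpace.single n (1 : ℝ)) (s := s)

theorem Finset.sum_mul_le_of_le_of_sum_le_one {ι : Type*} {s : Finset ι} {a w : ι → ℝ} {L : ℝ}
    (hL : 0 ≤ L) (ha : ∀ i ∈ s, a i ≤ L) (hw : ∀ i ∈ s, 0 ≤ w i) (hw1 : ∑ i ∈ s, w i ≤ 1) :
    ∑ i ∈ s, a i * w i ≤ L :=
  calc ∑ i ∈ s, a i * w i ≤ ∑ i ∈ s, L * w i :=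
        sum_le_sum fun i hi => mul_le_mul_of_nonneg_right (ha i hi) (hw i hi)
    _ = L * ∑ i ∈ s, w i := (mul_sum ..).symm
    _ ≤ L := mul_le_of_le_one_right hL hw1

theorem Fin.sub_sum_filter_lt_eq_sum_filter_le {E : Type*} [AddCommGroup E] {d : ℕ}
    {u : E} {f : Fin d → E} (hu : u = ∑ i, f i) (r : ℕ) :
    u - ∑ i ∈ univ.filter (fun i : Fin d => (i : ℕ) < r), f i =
      ∑ i ∈ univ.filter (fun i : Fin d => r ≤ (i : ℕ)), f i := by
  rw [hu, ← sum_filter_add_sum_filter_not univ (fun i : Fin d => (i : ℕ) < r)]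
  simp only [not_lt, add_sub_cancel_left]

section Snapshots

variable {H : Type*} [NormedAddCommGroup H] [InnerProductSpace ℝ H] {M : ℕ} {u : Fin M → H}
  {K : Matrix (Fin M) (Fin M) ℝ}

theorem inner_sum_smul_eq_mul_mulVec (hK : ∀ i j, K i j = 1 / (M : ℝ) * inner ℝ (u i) (u j))
    (v : Fin M → ℝ) (n : Fin M) :
    inner ℝ (u n) (∑ j, v j • u j) = M * (K.mulVec v) n := by
  have hM : (M : ℝ) ≠ 0 := by exact_mod_cast n.pos.ne'
  simp only [inner_sum, real_inner_smul_right, Matrix.mulVec, dotProduct, hK, mul_sum]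
  refine sum_congr rfl fun j _ => ?_
  field_simp

variable (u) in
noncomputable def podMode (lam : ℝ) (v : EuclideanSpace ℝ (Fin M)) : H :=
  (1 / √(M * lam)) • ∑ j, v j • u j

theorem inner_snapshot_podMode (hK : ∀ i j, K i j = 1 / (M : ℝ) * inner ℝ (u i) (u j))
    {lam : ℝ} {v : EuclideanSpace ℝ (Fin M)} (hv : K.mulVec v = lam • v) (n : Fin M) :
    inner ℝ (u n) (podMode u lam v) = √M * √lam * v n := by
  rw [podMode, real_inner_smul_right, inner_sum_smul_eq_mul_mulVec hK, hv]
  calc 1 / √(M * lam) * (M * (lam • v.ofLp) n) = M * lam / √(M * lam) * v n := by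
        rw [Pi.smul_apply, smul_eq_mul]; ring
    _ = √M * √lam * v n := by rw [Real.div_sqrt, Real.sqrt_mul M.cast_nonneg]

end Snapshots

theorem pod_snapshot_projection_bound_general
    {H : Type*} [NormedAddCommGroup H] [InnerProductSpace ℝ H]
    (M d : ℕ)
    (u : Fin M → H)
    (K : Matrix (Fin M) (Fin M) ℝ)
    (hK : ∀ i j, K i j = (1 / (M : ℝ)) * inner ℝ (u i) (u j))
    (lam : Fin d → ℝ) (x : Fin d → EuclideanSpace ℝ (Fin M))
    (hx : Orthonormal ℝ x)
    (heig : ∀ k, K.mulVec (x k) = lam k • (x k))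
    (hdesc : ∀ i j : Fin d, i ≤ j → lam j ≤ lam i)
    (hpos : ∀ k, 0 < lam k)
    (φ : Fin d → H)
    (hφdef : ∀ k, φ k = (1 / Real.sqrt ((M : ℝ) * lam k)) •
        ∑ j : Fin M, (x k j) • u j)
    (hφon : Orthonormal ℝ φ)
    (n : Fin M)
    (hspan : u n = ∑ i : Fin d, (inner ℝ (u n) (φ i) : ℝ) • φ i)
    (r : ℕ) (hr : r + 1 ≤ d) :
    (∀ i : Fin d, (inner ℝ (u n) (φ i) : ℝ) = Real.sqrt M * Real.sqrt (lam i) * x i n) ∧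
    ‖u n - ∑ i ∈ Finset.univ.filter (fun i : Fin d => (i : ℕ) < r),
        (inner ℝ (u n) (φ i) : ℝ) • φ i‖ =
      Real.sqrt M * Real.sqrt
        (∑ i ∈ Finset.univ.filter (fun i : Fin d => r ≤ (i : ℕ)), lam i * (x i n)^2) ∧
    ‖u n - ∑ i ∈ Finset.univ.filter (fun i : Fin d => (i : ℕ) < r),
        (inner ℝ (u n) (φ i) : ℝ) • φ i‖ ≤
      Real.sqrt M * Real.sqrt (lam ⟨r, lt_of_lt_of_le (Nat.lt_succ_self r) hr⟩) := by
  have hcoef : ∀ i, inner ℝ (u n) (φ i) = √M * √(lam i) * x i n := fun i => by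
    rw [hφdef i]; exact inner_snapshot_podMode hK (heig i) n
  have hresidual : ‖u n - ∑ i ∈ univ.filter (fun i : Fin d => (i : ℕ) < r),
      inner ℝ (u n) (φ i) • φ i‖ =
        √M * √(∑ i ∈ univ.filter (fun i : Fin d => r ≤ (i : ℕ)), lam i * x i n ^ 2) := by
    rw [Fin.sub_sum_filter_lt_eq_sum_filter_le hspan, hφon.norm_sum_smul_eq_sqrt,
      ← Real.sqrt_mul M.cast_nonneg, mul_sum]
    congr 1
    refine sum_congr rfl fun i _ => ?_
    rw [hcoef, mul_pow, mul_pow, Real.sq_sqrt M.cast_nonneg, Real.sq_sqrt (hpos i).le]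
    ring
  refine ⟨hcoef, hresidual, ?_⟩
  rw [hresidual]
  gcongr
  exact sum_mul_le_of_le_of_sum_le_one (hpos _).le
    (fun i hi => hdesc _ i (mem_filter.1 hi).2) (fun i _ => sq_nonneg _)
    (hx.sum_sq_apply_le_one _ n)

theorem pod_snapshot_projection_bound
    {H : Type*} [NormedAddCommGroup H] [InnerProductSpace ℝ H]
    (M d : ℕ) (hM : 0 < M)
    (u : Fin M → H)
    (K : Matrix (Fin M) (Fin M) ℝ)
    (hK : ∀ i j, K i j = (1 / (M : ℝ)) * inner ℝ (u i) (u j))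
    (lam : Fin d → ℝ) (x : Fin d → EuclideanSpace ℝ (Fin M))
    (hx : Orthonormal ℝ x)
    (heig : ∀ k, K.mulVec (x k) = lam k • (x k))
    (hdesc : ∀ i j : Fin d, i ≤ j → lam j ≤ lam i)
    (hpos : ∀ k, 0 < lam k)
    (φ : Fin d → H)
    (hφdef : ∀ k, φ k = (1 / Real.sqrt ((M : ℝ) * lam k)) •
        ∑ j : Fin M, (x k j) • u j)
    (hφon : Orthonormal ℝ φ)
    (n : Fin M)
    (hspan : u n = ∑ i : Fin d, (inner ℝ (u n) (φ i) : ℝ) • φ i)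
    (r : ℕ) (hr : r + 1 ≤ d) :
    (∀ i : Fin d, (inner ℝ (u n) (φ i) : ℝ) = Real.sqrt M * Real.sqrt (lam i) * x i n) ∧
    ‖u n - ∑ i ∈ Finset.univ.filter (fun i : Fin d => (i : ℕ) < r),
        (inner ℝ (u n) (φ i) : ℝ) • φ i‖ =
      Real.sqrt M * Real.sqrt
        (∑ i ∈ Finset.univ.filter (fun i : Fin d => r ≤ (i : ℕ)), lam i * (x i n)^2) ∧
    ‖u n - ∑ i ∈ Finset.univ.filter (fun i : Fin d => (i : ℕ) < r),
        (inner ℝ (u n) (φ i) : ℝ) • φ i‖ ≤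
      Real.sqrt M * Real.sqrt (lam ⟨r, lt_of_lt_of_le (Nat.lt_succ_self r) hr⟩) :=
  pod_snapshot_projection_bound_general M d u K hK lam x hx heig hdesc hpos φ hφdef hφon n hspan r
    hr
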